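/- Let T > 0, μ ∈ (0,1) and C₁ > 0. Let v : [0,T] → ℝ be continuously differentiable on [0,T] and twice continuously differentiable on (0,T] with |v″(t)| ≤ C₁ t^{−μ} for all t ∈ (0,T]. Then there exists C₂ > 0, depending only on C₁ and μ, such that for every positive integer N (τ = T/N, t_k = kτ), every n with 1 ≤ n ≤ N, and every t ∈ [t_{n−1}, t_n], |v(t) − Πv(t)| ≤ C₂ τ ( t_n^{1−μ} − t_{n−1}^{1−μ} ). -/

import Mathlib

/-!
On `[t_{n-1}, t_n]` compare `v` with its tangent line at the right endpoint `t_n > 0`, where `v''`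
is controlled. Since `|v''(s)| ≤ C₁ s^{-μ}` and `s^{-μ}` is the derivative of
`s^{1-μ}/(1-μ)`, the derivative `v'` oscillates by at most
`M = C₁ (t_n^{1-μ} - t_{n-1}^{1-μ}) / (1-μ)` on the interval, so the tangent line approximates `v`
to within `M (t_n - t)`. The interpolation error is then at most `2 M τ`, with `C₂ = 2 C₁ / (1-μ)`.
-/

open Set

theorem abs_sub_le_sub_of_abs_deriv_le {f f' g g' : ℝ → ℝ} {a b : ℝ} (hab : a ≤ b)
    (hf : ContinuousOn f (Icc a b)) (hg : ContinuousOn g (Icc a b))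
    (hf' : ∀ x ∈ Ioo a b, HasDerivAt f (f' x) x) (hg' : ∀ x ∈ Ioo a b, HasDerivAt g (g' x) x)
    (hbound : ∀ x ∈ Ioo a b, |f' x| ≤ g' x) :
    |f b - f a| ≤ g b - g a := by
  have hmono : ∀ σ : ℝ, σ = 1 ∨ σ = -1 → MonotoneOn (fun x => g x + σ * f x) (Icc a b) := by
    rintro σ hσ
    refine monotoneOn_of_hasDerivWithinAt_nonneg (f' := fun x => g' x + σ * f' x)
      (convex_Icc a b) (hg.add (continuousOn_const.mul hf)) (fun x hx => ?_) (fun x hx => ?_)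
    · rw [interior_Icc] at hx
      exact ((hg' x hx).add ((hf' x hx).const_mul σ)).hasDerivWithinAt
    · rw [interior_Icc] at hx
      have := abs_le.mp (hbound x hx)
      rcases hσ with rfl | rfl <;> linarith
  have hplus := hmono 1 (Or.inl rfl) ⟨le_rfl, hab⟩ ⟨hab, le_rfl⟩ hab
  have hminus := hmono (-1) (Or.inr rfl) ⟨le_rfl, hab⟩ ⟨hab, le_rfl⟩ hab
  simp only at hplus hminus
  rw [abs_le]
  constructor <;> linarith

theorem abs_sub_sub_mul_le_of_abs_deriv_sub_le {f f' : ℝ → ℝ} {x b c M : ℝ} (hxb : x ≤ b)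
    (hf : ContinuousOn f (Icc x b)) (hf' : ∀ y ∈ Ioo x b, HasDerivAt f (f' y) y)
    (hM : ∀ y ∈ Ioo x b, |f' y - c| ≤ M) :
    |f b - f x - c * (b - x)| ≤ M * (b - x) := by
  have h := abs_sub_le_sub_of_abs_deriv_le (f := fun y => f y - c * y) (g := fun y => M * y) hxb
    (hf.sub (continuousOn_const.mul continuousOn_id)) (continuousOn_const.mul continuousOn_id)
    (fun y hy => (hf' y hy).sub ((hasDerivAt_id y).const_mul c))
    (fun y _ => (hasDerivAt_id y).const_mul M) (fun y hy => by simpa using hM y hy)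
  convert h using 2 <;> ring

theorem hasDerivAt_div_one_sub_mul_rpow_one_sub {μ y : ℝ} (hμ : μ ≠ 1) (hy : 0 < y) (C : ℝ) :
    HasDerivAt (fun x => C / (1 - μ) * x ^ (1 - μ)) (C * y ^ (-μ)) y := by
  refine ((Real.hasDerivAt_rpow_const (p := 1 - μ) (Or.inl hy.ne')).const_mul
    (C / (1 - μ))).congr_deriv ?_
  rw [sub_sub_cancel_left]
  field_simp [sub_ne_zero.mpr hμ.symm]

theorem abs_sub_le_of_abs_deriv_le_rpow {f f' : ℝ → ℝ} {C μ x b : ℝ} (hμ : μ < 1)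
    (hx : 0 ≤ x) (hxb : x ≤ b) (hf : ContinuousOn f (Icc x b))
    (hf' : ∀ y ∈ Ioo x b, HasDerivAt f (f' y) y) (hbound : ∀ y ∈ Ioo x b, |f' y| ≤ C * y ^ (-μ)) :
    |f b - f x| ≤ C / (1 - μ) * (b ^ (1 - μ) - x ^ (1 - μ)) := by
  have h := abs_sub_le_sub_of_abs_deriv_le (g := fun y => C / (1 - μ) * y ^ (1 - μ)) hxb hf
    (continuousOn_const.mul (continuousOn_id.rpow_const fun _ _ => Or.inr (by linarith))) hf'
    (fun y hy => hasDerivAt_div_one_sub_mul_rpow_one_sub hμ.ne (hx.trans_lt hy.1) C) hbound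
  linarith [mul_sub (C / (1 - μ)) (b ^ (1 - μ)) (x ^ (1 - μ))]

theorem abs_sub_linear_interp_le {f : ℝ → ℝ} {a b c M t : ℝ} (hab : a < b) (ht : t ∈ Icc a b)
    (h : ∀ x ∈ Icc a b, |f b - f x - c * (b - x)| ≤ M * (b - x)) :
    |f t - (f a + (t - a) * (f b - f a) / (b - a))| ≤ 2 * M * (b - a) := by
  have hba : 0 < b - a := sub_pos.mpr hab
  have hRa := h a ⟨le_rfl, hab.le⟩
  have hRt := h t ht
  set Ra := f b - f a - c * (b - a)
  have herr : f t - (f a + (t - a) * (f b - f a) / (b - a))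
      = -(f b - f t - c * (b - t)) + (b - t) / (b - a) * Ra := by
    field_simp
    ring
  have hw : (b - t) / (b - a) ≤ 1 := (div_le_one hba).mpr (by linarith [ht.1])
  have hw0 : 0 ≤ (b - t) / (b - a) := div_nonneg (by linarith [ht.2]) hba.le
  have hM : 0 ≤ M := nonneg_of_mul_nonneg_left ((abs_nonneg _).trans hRa) hba
  rw [herr]
  calc _ ≤ |f b - f t - c * (b - t)| + (b - t) / (b - a) * |Ra| := by
        rw [← abs_of_nonneg hw0, ← abs_mul, abs_of_nonneg hw0]
        exact (abs_add_le _ _).trans (by rw [abs_neg])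
    _ ≤ M * (b - t) + 1 * (M * (b - a)) := by gcongr
    _ ≤ 2 * M * (b - a) := by nlinarith [ht.1]

theorem abs_sub_linear_interp_le_of_abs_deriv_sub_le {f f' : ℝ → ℝ} {a b c M t : ℝ}
    (hab : a < b) (ht : t ∈ Icc a b) (hf : ContinuousOn f (Icc a b))
    (hf' : ∀ y ∈ Ioo a b, HasDerivAt f (f' y) y) (hM : ∀ y ∈ Ioo a b, |f' y - c| ≤ M) :
    |f t - (f a + (t - a) * (f b - f a) / (b - a))| ≤ 2 * M * (b - a) :=
  abs_sub_linear_interp_le hab ht fun _ hx =>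
    abs_sub_sub_mul_le_of_abs_deriv_sub_le hx.2 (hf.mono (Icc_subset_Icc_left hx.1))
      (fun y hy => hf' y (Ioo_subset_Ioo_left hx.1 hy))
      (fun y hy => hM y (Ioo_subset_Ioo_left hx.1 hy))

theorem abs_deriv_sub_le_of_abs_deriv2_le_rpow {f' f'' : ℝ → ℝ} {C μ a b : ℝ} (hμ : μ < 1)
    (ha : 0 ≤ a) (hf' : ContinuousOn f' (Icc a b)) (hf'' : ∀ y ∈ Ioo a b, HasDerivAt f' (f'' y) y)
    (hbound : ∀ y ∈ Ioo a b, |f'' y| ≤ C * y ^ (-μ)) (hC : 0 ≤ C) :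
    ∀ x ∈ Ioo a b, |f' x - f' b| ≤ C / (1 - μ) * (b ^ (1 - μ) - a ^ (1 - μ)) := by
  intro x hx
  have h1μ : 0 < 1 - μ := sub_pos.mpr hμ
  rw [abs_sub_comm]
  calc _ ≤ C / (1 - μ) * (b ^ (1 - μ) - x ^ (1 - μ)) :=
        abs_sub_le_of_abs_deriv_le_rpow hμ (ha.trans hx.1.le) hx.2.le
          (hf'.mono (Icc_subset_Icc_left hx.1.le))
          (fun y hy => hf'' y (Ioo_subset_Ioo_left hx.1.le hy))
          (fun y hy => hbound y (Ioo_subset_Ioo_left hx.1.le hy))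
    _ ≤ _ := by gcongr; exact hx.1.le

theorem stmt11 (μ C₁ : ℝ) (hμ : μ ∈ Set.Ioo (0 : ℝ) 1) (hC₁ : 0 < C₁) :
    ∃ C₂ > 0, ∀ T : ℝ, 0 < T → ∀ v v' v'' : ℝ → ℝ,
      (∀ t ∈ Set.Icc (0 : ℝ) T, HasDerivWithinAt v (v' t) (Set.Icc 0 T) t) →
      ContinuousOn v' (Set.Icc (0 : ℝ) T) →
      (∀ t ∈ Set.Ioc (0 : ℝ) T, HasDerivWithinAt v' (v'' t) (Set.Ioc 0 T) t) →
      ContinuousOn v'' (Set.Ioc (0 : ℝ) T) →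
      (∀ t ∈ Set.Ioc (0 : ℝ) T, |v'' t| ≤ C₁ * t ^ (-μ)) →
      ∀ N : ℕ, 0 < N → ∀ n : ℕ, 1 ≤ n → n ≤ N →
        ∀ t ∈ Set.Icc (((n : ℝ) - 1) * (T / N)) ((n : ℝ) * (T / N)),
          |v t - (v (((n : ℝ) - 1) * (T / N))
              + (t - ((n : ℝ) - 1) * (T / N)) *
                  (v ((n : ℝ) * (T / N)) - v (((n : ℝ) - 1) * (T / N))) / (T / N))|
            ≤ C₂ * (T / N) *
                (((n : ℝ) * (T / N)) ^ (1 - μ) - (((n : ℝ) - 1) * (T / N)) ^ (1 - μ)) := by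
  have h1μ : 0 < 1 - μ := sub_pos.mpr hμ.2
  refine ⟨2 * C₁ / (1 - μ), by positivity, ?_⟩
  intro T hT v v' v'' hv hv' hv'' _ hbound N _ n hn hnN t ht
  set τ := T / N
  have hτ : 0 < τ := by positivity
  have ha : 0 ≤ ((n : ℝ) - 1) * τ := mul_nonneg (by simp [hn]) hτ.le
  have hbT : (n : ℝ) * τ ≤ T :=
    calc (n : ℝ) * τ ≤ N * τ := mul_le_mul_of_nonneg_right (by exact_mod_cast hnN) hτ.le
      _ = T := mul_div_cancel₀ T (by positivity)
  have hsub : Ioo (((n : ℝ) - 1) * τ) (n * τ) ⊆ Ioo 0 T := Ioo_subset_Ioo ha hbT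
  have hv'_osc := abs_deriv_sub_le_of_abs_deriv2_le_rpow hμ.2 ha
    (hv'.mono (Icc_subset_Icc ha hbT))
    (fun y hy => (hv'' y ⟨(hsub hy).1, (hsub hy).2.le⟩).hasDerivAt
      (Ioc_mem_nhds (hsub hy).1 (hsub hy).2))
    (fun y hy => hbound y ⟨(hsub hy).1, (hsub hy).2.le⟩) hC₁.le
  have herr := abs_sub_linear_interp_le_of_abs_deriv_sub_le (by linarith) ht
    (fun y hy => (hv y (Icc_subset_Icc ha hbT hy)).continuousWithinAt.mono (Icc_subset_Icc ha hbT))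
    (fun y hy => (hv y (Ioo_subset_Icc_self (hsub hy))).hasDerivAt
      (Icc_mem_nhds (hsub hy).1 (hsub hy).2)) hv'_osc
  rw [show (n : ℝ) * τ - (n - 1) * τ = τ by ring] at herr
  exact herr.trans_eq (by ring)
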